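/- arXiv:1003.0752 — 4 statements merged into one kernel-verified Lean document; each statement's English description precedes it below -/
import Mathlib

section
/- For any real y ≥ 2, the sum over primes p ≤ y of (log p)/p equals log y + O(1), i.e. there exists an absolute constant C such that |∑_{p ≤ y, p prime} (log p)/p − log y| ≤ C for all y ≥ 2. -/
/-!
Take logarithms in Legendre's formula `n! = ∏_{p ≤ n} p ^ v_p(n!)`. Since
`n/p - 1 ≤ v_p(n!) ≤ n/(p-1) = n/p + n/(p(p-1))`, the sum `n ∑_{p ≤ n} log p / p` differs from
`log n!` by at most `θ(n) ≤ n log 4` on one side and `n ∑ log p / (p(p-1))` on the other, and the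
latter series converges. Stirling's bounds `n log n - n ≤ log n! ≤ n log n` then give
`∑_{p ≤ n} log p / p = log n + O(1)`.
-/

open Finset Real Chebyshev
open scoped Nat

namespace Nat

theorem div_le_factorization_factorial {p : ℕ} (hp : p.Prime) (n : ℕ) :
    n / p ≤ (n !).factorization p := by
  rw [factorization_factorial hp (by omega : log p n < log p n + 2)]
  simpa using single_le_sum (f := fun i => n / p ^ i) (fun _ _ => Nat.zero_le _)
    (by simp : 1 ∈ Ico 1 (log p n + 2))

theorem primeFactors_factorial (n : ℕ) : (n !).primeFactors = primesLE n := by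
  ext p
  simp only [mem_primeFactors, mem_primesLE, ne_eq, factorial_ne_zero, not_false_eq_true, and_true]
  exact ⟨fun ⟨hp, hdvd⟩ => ⟨hp.dvd_factorial.1 hdvd, hp⟩,
    fun ⟨hle, hp⟩ => ⟨hp, hp.dvd_factorial.2 hle⟩⟩

end Nat

namespace Real

theorem log_factorial_eq_sum_primesLE (n : ℕ) :
    log (n ! : ℝ) = ∑ p ∈ n.primesLE, (n !).factorization p * log p := by
  rw [log_nat_eq_sum_factorization, Finsupp.sum, Nat.support_factorization,
    Nat.primeFactors_factorial]

theorem log_factorial_le (n : ℕ) : log (n ! : ℝ) ≤ n * log n := by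
  rw [← log_pow]
  rcases eq_or_ne n 0 with rfl | hn
  · simp
  exact log_le_log (by positivity) (mod_cast n.factorial_le_pow)

theorem mul_log_sub_le_log_factorial (n : ℕ) : n * log n - n ≤ log (n ! : ℝ) := by
  rcases eq_or_ne n 0 with rfl | hn
  · simp
  have := Stirling.le_log_factorial_stirling hn
  have : 0 ≤ log n := log_natCast_nonneg n
  have : 0 ≤ log (2 * π) := log_nonneg (by linarith [pi_gt_three])
  linarith

theorem log_div_mul_sub_one_nonneg (n : ℕ) : 0 ≤ log n / (n * (n - 1)) := by
  rcases Nat.lt_or_ge n 1 with hn | hn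
  · simp [Nat.lt_one_iff.1 hn]
  have : (1 : ℝ) ≤ n := mod_cast hn
  exact div_nonneg (log_natCast_nonneg n) (mul_nonneg (by linarith) (by linarith))

theorem summable_log_div_mul_sub_one :
    Summable fun n : ℕ => log n / (n * (n - 1)) := by
  refine Summable.of_nonneg_of_le log_div_mul_sub_one_nonneg (fun n => ?_)
    ((summable_nat_rpow_inv.2 (by norm_num : (1 : ℝ) < 3 / 2)).mul_left 4)
  rcases Nat.lt_or_ge n 2 with hn | hn
  · interval_cases n <;> simp
  have h2 : (2 : ℝ) ≤ n := mod_cast hn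
  have hlog : log n ≤ 2 * √n := by
    have := log_natCast_le_rpow_div n (by norm_num : (0 : ℝ) < 1 / 2)
    rwa [← sqrt_eq_rpow, div_div_eq_mul_div, div_one, mul_comm] at this
  have hpow : (n : ℝ) ^ (3 / 2 : ℝ) = n * √n := by
    rw [sqrt_eq_rpow, show (3 / 2 : ℝ) = 1 + 1 / 2 by norm_num, rpow_add (by linarith), rpow_one]
  have hsq : 0 < √n := by positivity
  have hsq2 : √n ^ 2 = n := sq_sqrt (by linarith)
  rw [hpow, div_le_iff₀ (by nlinarith)]
  calc log n ≤ 2 * √n := hlog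
    _ ≤ 4 * (n * √n)⁻¹ * (n * (n - 1)) := by
      field_simp
      nlinarith

theorem log_le_log_natFloor_add_log_two {y : ℝ} (hy : 1 ≤ y) :
    log y ≤ log ⌊y⌋₊ + log 2 := by
  have hfloor : (1 : ℝ) ≤ ⌊y⌋₊ := mod_cast Nat.one_le_floor_iff _ |>.2 hy
  rw [← log_mul (by positivity) (by norm_num)]
  exact log_le_log (by linarith) (by linarith [Nat.lt_floor_add_one y])

end Real

theorem mul_sum_log_div_sub_theta_le_log_factorial (n : ℕ) :
    n * ∑ p ∈ n.primesLE, log p / p - θ n ≤ log (n ! : ℝ) := by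
  rw [theta_eq_sum_primesLE_log, mul_sum, ← sum_sub_distrib, log_factorial_eq_sum_primesLE]
  refine sum_le_sum fun p hp => ?_
  have hp := Nat.prime_of_mem_primesLE hp
  have hfloor : (n / p : ℝ) - 1 ≤ (n / p : ℕ) := by
    simpa [Nat.floor_div_eq_div] using (Nat.sub_one_lt_floor ((n : ℝ) / p)).le
  calc n * (log p / p) - log p = (n / p - 1) * log p := by
        field_simp [hp.ne_zero]
    _ ≤ ((n / p : ℕ) : ℝ) * log p := by gcongr
    _ ≤ ((n !).factorization p : ℝ) * log p := by
        gcongr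
        exact_mod_cast Nat.div_le_factorization_factorial hp n

theorem log_factorial_le_mul_sum_log_div_add_tsum (n : ℕ) :
    log (n ! : ℝ) ≤ n * (∑ p ∈ n.primesLE, log p / p + ∑' m : ℕ, log m / (m * (m - 1))) := by
  calc log (n ! : ℝ) = ∑ p ∈ n.primesLE, ((n !).factorization p : ℝ) * log p :=
        log_factorial_eq_sum_primesLE n
    _ ≤ ∑ p ∈ n.primesLE, n * (log p / p + log p / (p * (p - 1))) := by
        refine sum_le_sum fun p hp => ?_
        have hp := Nat.prime_of_mem_primesLE hp
        have hp1 : (1 : ℝ) < p := mod_cast hp.one_lt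
        have hdiv : ((n !).factorization p : ℝ) ≤ n / (p - 1) := by
          have := Nat.cast_div_le (α := ℝ) (m := n) (n := p - 1)
          rw [Nat.cast_sub hp.one_le, Nat.cast_one] at this
          exact (Nat.cast_le.2 (Nat.factorization_factorial_le_div_pred hp n)).trans this
        calc ((n !).factorization p : ℝ) * log p ≤ n / (p - 1) * log p := by gcongr
          _ = n * (log p / p + log p / (p * (p - 1))) := by
              field_simp [(by linarith : (p : ℝ) - 1 ≠ 0), hp.ne_zero]
              ring
    _ = n * (∑ p ∈ n.primesLE, log p / p + ∑ p ∈ n.primesLE, log p / (p * (p - 1))) := by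
        rw [← mul_sum, sum_add_distrib]
    _ ≤ n * (∑ p ∈ n.primesLE, log p / p + ∑' m : ℕ, log m / (m * (m - 1))) := by
        gcongr
        exact summable_log_div_mul_sub_one.sum_le_tsum _ fun m _ => log_div_mul_sub_one_nonneg m

theorem sum_primesLE_log_div_sub_log_le (n : ℕ) :
    ∑ p ∈ n.primesLE, log p / p - log n ≤ log 4 := by
  rcases Nat.eq_zero_or_pos n with rfl | hn
  · simpa using log_nonneg (by norm_num : (1 : ℝ) ≤ 4)
  have hn : (0 : ℝ) < n := mod_cast hn
  have hlower := mul_sum_log_div_sub_theta_le_log_factorial n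
  have hupper := log_factorial_le n
  have htheta := theta_le_log4_mul_x hn.le
  refine le_of_mul_le_mul_left ?_ hn
  linear_combination hlower + hupper + htheta

theorem log_sub_sum_primesLE_log_div_le (n : ℕ) :
    log n - ∑ p ∈ n.primesLE, log p / p ≤ 1 + ∑' m : ℕ, log m / (m * (m - 1)) := by
  rcases Nat.eq_zero_or_pos n with rfl | hn
  · have : (0 : ℝ) ≤ ∑' m : ℕ, log m / (m * (m - 1)) := tsum_nonneg log_div_mul_sub_one_nonneg
    simpa using add_nonneg zero_le_one this
  have hn : (0 : ℝ) < n := mod_cast hn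
  have hlower := mul_log_sub_le_log_factorial n
  have hupper := log_factorial_le_mul_sum_log_div_add_tsum n
  refine le_of_mul_le_mul_left ?_ hn
  linear_combination hlower + hupper

theorem mertens_first :
    ∃ C : ℝ, ∀ y : ℝ, 2 ≤ y →
      |(∑ p ∈ (Finset.Iic ⌊y⌋₊).filter Nat.Prime, Real.log p / p) - Real.log y| ≤ C := by
  refine ⟨1 + (∑' m : ℕ, log m / (m * (m - 1))) + log 4, fun y hy => ?_⟩
  have hprimes : (Iic ⌊y⌋₊).filter Nat.Prime = ⌊y⌋₊.primesLE := by
    ext p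
    simp [Nat.mem_primesLE]
  have hfloor : (0 : ℝ) < ⌊y⌋₊ := mod_cast Nat.floor_pos.2 (by linarith)
  have hupper := sum_primesLE_log_div_sub_log_le ⌊y⌋₊
  have hlower := log_sub_sum_primesLE_log_div_le ⌊y⌋₊
  have hlog_floor := log_le_log hfloor (Nat.floor_le (by linarith))
  have hlog_y := log_le_log_natFloor_add_log_two (by linarith : 1 ≤ y)
  have hlog_two := log_le_log (by norm_num) (by norm_num : (2 : ℝ) ≤ 4)
  have htail : (0 : ℝ) ≤ ∑' m : ℕ, log m / (m * (m - 1)) :=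
    tsum_nonneg log_div_mul_sub_one_nonneg
  rw [hprimes, abs_sub_le_iff]
  constructor <;> linarith
end

section
/- There exists a constant C such that for all integers j ≥ 3, the sum over primes p dividing j of (log p)/p is at most C · log(log j). -/
/-!
Split the prime divisors of `j` at `log j`. Those above `log j` contribute at most
`(∑_{p ∣ j} log p) / log j ≤ 1`. Those below contribute at most `∑_{p ≤ log j} log p / p`, which
is `O(log log j)`: on each dyadic range `(n/2, n]` the sum is at most `(2/n) θ(n) ≤ 2 log 4` by
Chebyshev's bound, and there are `O(log n)` such ranges.
-/

open Finset Real Chebyshev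

lemma sum_primesLE_log_div_gt_half_le (n : ℕ) :
    ∑ p ∈ n.primesLE with n / 2 < p, log p / p ≤ 2 * log 4 := by
  rcases Nat.eq_zero_or_pos n with rfl | hn
  · simp only [show Nat.primesLE 0 = ∅ by decide, filter_empty, sum_empty]
    positivity
  have hn' : (0 : ℝ) < n := by exact_mod_cast hn
  have term_le : ∀ p ∈ {p ∈ n.primesLE | n / 2 < p}, log p / p ≤ 2 / n * log p := by
    intro p hp
    simp only [mem_filter, Nat.mem_primesLE] at hp
    have hnp : (n : ℝ) ≤ 2 * p := by exact_mod_cast (by omega : n ≤ 2 * p)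
    have hp0 : (0 : ℝ) < p := by exact_mod_cast hp.1.2.pos
    rw [div_mul_eq_mul_div, div_le_div_iff₀ hp0 hn']
    nlinarith [log_natCast_nonneg p]
  calc ∑ p ∈ n.primesLE with n / 2 < p, log p / p
      ≤ ∑ p ∈ n.primesLE with n / 2 < p, 2 / n * log p := sum_le_sum term_le
    _ ≤ ∑ p ∈ n.primesLE, 2 / n * log p :=
        sum_le_sum_of_subset_of_nonneg (filter_subset _ _)
          fun p _ _ => mul_nonneg (by positivity) (log_natCast_nonneg p)
    _ = 2 / n * θ n := by rw [← mul_sum, theta_eq_sum_primesLE_log]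
    _ ≤ 2 / n * (log 4 * n) := by gcongr; exact theta_le_log4_mul_x n.cast_nonneg
    _ = 2 * log 4 := by field_simp

lemma sum_primesLE_log_div_le (n : ℕ) :
    ∑ p ∈ n.primesLE, log p / p ≤ 2 * log 4 * (Nat.log 2 n + 1) := by
  induction n using Nat.strong_induction_on with
  | _ n ih =>
  rcases lt_or_ge n 2 with hn | hn
  · have : n.primesLE = ∅ := by interval_cases n <;> decide
    rw [this, sum_empty]
    positivity
  have lower_half : {p ∈ n.primesLE | ¬ n / 2 < p} = (n / 2).primesLE := by
    ext p
    simp only [mem_filter, Nat.mem_primesLE, not_lt]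
    exact ⟨fun h => ⟨by omega, h.1.2⟩, fun h => ⟨⟨by omega, h.2⟩, h.1⟩⟩
  have log_half : Nat.log 2 (n / 2) + 1 = Nat.log 2 n := by
    have := Nat.log_pos one_lt_two hn
    rw [Nat.log_div_base]
    omega
  rw [← sum_filter_add_sum_filter_not _ (fun p => n / 2 < p), lower_half, ← log_half]
  push_cast
  linarith [sum_primesLE_log_div_gt_half_le n, ih (n / 2) (by omega)]

lemma one_lt_log_of_three_le {x : ℝ} (hx : 3 ≤ x) : 1 < log x := by
  rw [lt_log_iff_exp_lt (by positivity)]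
  exact exp_one_lt_three.trans_le hx

lemma sum_primeFactors_log_le (j : ℕ) : ∑ p ∈ j.primeFactors, log p ≤ log j := by
  rcases Nat.eq_zero_or_pos j with rfl | hj
  · simp
  have prod_pos : 0 < ∏ p ∈ j.primeFactors, (p : ℝ) :=
    prod_pos fun p hp => by exact_mod_cast (Nat.prime_of_mem_primeFactors hp).pos
  have prod_le : ∏ p ∈ j.primeFactors, (p : ℝ) ≤ j := by
    rw [← Nat.cast_prod]
    exact_mod_cast Nat.le_of_dvd hj (Nat.prod_primeFactors_dvd j)
  rw [← log_prod fun p hp => by exact_mod_cast (Nat.prime_of_mem_primeFactors hp).ne_zero]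
  exact log_le_log prod_pos prod_le

lemma sum_primeFactors_log_div_le (j : ℕ) {y : ℝ} (hy : 0 < y) :
    ∑ p ∈ j.primeFactors, log p / p ≤ ∑ p ∈ ⌊y⌋₊.primesLE, log p / p + log j / y := by
  rw [← sum_filter_add_sum_filter_not _ (fun p => p ≤ ⌊y⌋₊)]
  have small_primes : {p ∈ j.primeFactors | p ≤ ⌊y⌋₊} ⊆ ⌊y⌋₊.primesLE := fun p hp => by
    simp only [mem_filter, Nat.mem_primesLE, Nat.mem_primeFactors] at hp ⊢
    exact ⟨hp.2, hp.1.1⟩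
  refine add_le_add (sum_le_sum_of_subset_of_nonneg small_primes fun p _ _ => ?_) ?_
  · exact div_nonneg (log_natCast_nonneg p) p.cast_nonneg
  calc ∑ p ∈ j.primeFactors with ¬p ≤ ⌊y⌋₊, log p / p
      ≤ ∑ p ∈ j.primeFactors with ¬p ≤ ⌊y⌋₊, log p / y := by
        gcongr with p hp
        exact (Nat.lt_of_floor_lt (not_le.mp (mem_filter.mp hp).2)).le
    _ ≤ ∑ p ∈ j.primeFactors, log p / y :=
        sum_le_sum_of_subset_of_nonneg (filter_subset _ _)
          fun p _ _ => div_nonneg (log_natCast_nonneg p) hy.le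
    _ ≤ log j / y := by rw [← sum_div]; gcongr; exact sum_primeFactors_log_le j

lemma sum_primeFactors_log_div_le_loglog {j : ℕ} (hj : 3 ≤ j) :
    ∑ p ∈ j.primeFactors, log p / p ≤ 2 * log 4 * (log (log j) / log 2 + 1) + 1 := by
  have one_lt_log : 1 < log j := one_lt_log_of_three_le (by exact_mod_cast hj)
  have floor_pos : 0 < ⌊log j⌋₊ := Nat.floor_pos.mpr one_lt_log.le
  have log_floor : (Nat.log 2 ⌊log j⌋₊ : ℝ) ≤ log (log j) / log 2 := by
    rw [log_div_log]
    exact (natLog_le_logb _ _).trans <| by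
      push_cast
      exact logb_le_logb_of_le one_lt_two (by exact_mod_cast floor_pos)
        (Nat.floor_le (by positivity))
  calc ∑ p ∈ j.primeFactors, log p / p
      ≤ ∑ p ∈ ⌊log j⌋₊.primesLE, log p / p + log j / log j :=
        sum_primeFactors_log_div_le j (by positivity)
    _ ≤ 2 * log 4 * (log (log j) / log 2 + 1) + 1 := by
        rw [div_self (by positivity)]
        gcongr
        exact (sum_primesLE_log_div_le _).trans (by gcongr)

theorem levinson_prime_divisor_bound :
    ∃ C : ℝ, ∀ j : ℕ, 3 ≤ j →
      (∑ p ∈ j.primeFactors, Real.log p / p) ≤ C * Real.log (Real.log j) := by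
  set A := 2 * log 4 / log 2
  set B := 2 * log 4 + 1
  set L₀ := log (log 3)
  have L₀_pos : 0 < L₀ := log_pos (one_lt_log_of_three_le le_rfl)
  refine ⟨A + B / L₀, fun j hj => ?_⟩
  have L₀_le : L₀ ≤ log (log j) :=
    log_le_log (by linarith [one_lt_log_of_three_le le_rfl])
      (log_le_log (by norm_num) (by exact_mod_cast hj))
  calc ∑ p ∈ j.primeFactors, log p / p
      ≤ 2 * log 4 * (log (log j) / log 2 + 1) + 1 := sum_primeFactors_log_div_le_loglog hj
    _ = A * log (log j) + B / L₀ * L₀ := by rw [div_mul_cancel₀ _ L₀_pos.ne']; ring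
    _ ≤ A * log (log j) + B / L₀ * log (log j) := by gcongr
    _ = (A + B / L₀) * log (log j) := by ring
end

section
/- Let m ≥ 1, let a_1, …, a_m ∈ {1, 2}, let f : [1, ∞) → ℝ be continuous, and let D ≥ 1. Then the iterated integral ∫_1^D (log^{a_1−1} x_1)/x_1 dx_1 ∫_1^{D/x_1} (log^{a_2−1} x_2)/x_2 dx_2 ⋯ ∫_1^{D/(x_1⋯x_m)} f(x_1⋯x_m·x)/x dx equals (∏_{i=1}^m (a_i−1)!) / (∑_{i=1}^m a_i)! times ∫_1^D f(x)·(log x)^{∑_{i=1}^m a_i} / x dx. -/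
open intervalIntegral

/-- Iterated integral
`∫_1^D (log x₁)^(a₁-1)/x₁ ⋯ ∫_1^{D/(x₁⋯x_m)} f(x₁⋯x_m · x)/x dx ⋯ dx₁`,
where `t` records the product of the outer variables. -/
noncomputable def iterInt (f : ℝ → ℝ) : List ℕ → ℝ → ℝ → ℝ
  | [], D, t => ∫ x in (1:ℝ)..D, f (t * x) / x
  | a :: l, D, t => ∫ x in (1:ℝ)..D, (Real.log x) ^ (a - 1) / x * iterInt f l (D / x) (t * x)

/-!
The substitution `u = x y` turns the inner integral of one step of the iteration into
`∫_x^D g(u) (log u - log x)^n du/u`. Expanding the binomial and integrating each term by parts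
against `log^p x / x` leaves multiples of `∫_1^D g(u) log^(p+n+1) u du/u`, whose coefficients add
up to the Beta value `p! n! / (p+n+1)!`. Induction along the list of exponents gives the
formula.
-/

open Real Set Finset
open MeasureTheory (volume)
open scoped Nat

theorem integral_deriv_mul_integral_eq {F F' ψ : ℝ → ℝ} {a b : ℝ}
    (hF : ∀ x ∈ uIcc a b, HasDerivAt F (F' x) x)
    (hF' : IntervalIntegrable F' volume a b)
    (hψ : ContinuousOn ψ (uIcc a b)) :
    ∫ x in a..b, F' x * ∫ u in x..b, ψ u = ∫ x in a..b, (F x - F a) * ψ x := by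
  have hFc : ContinuousOn F (uIcc a b) := fun x hx => (hF x hx).continuousAt.continuousWithinAt
  have htail : ∀ x ∈ Ioo (min a b) (max a b),
      HasDerivAt (fun x => ∫ u in x..b, ψ u) (-ψ x) x :=
    fun x hx => integral_hasDerivAt_left
      (hψ.mono (uIcc_subset_uIcc_right (Ioo_subset_Icc_self hx))).intervalIntegrable
      ((hψ.mono Ioo_subset_Icc_self).stronglyMeasurableAtFilter isOpen_Ioo x hx)
      (hψ.continuousAt (Icc_mem_nhds hx.1 hx.2))
  have ibp := integral_mul_deriv_eq_deriv_mul_of_hasDerivAt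
    (continuousOn_primitive_interval_left hψ.integrableOn_uIcc)
    hFc htail (fun x hx => hF x (Ioo_subset_Icc_self hx)) hψ.intervalIntegrable.neg hF'
  simp only [integral_same, zero_mul, zero_sub, neg_mul, intervalIntegral.integral_neg] at ibp
  simp only [sub_mul]
  rw [integral_sub (f := fun x => F x * ψ x) (hFc.mul hψ).intervalIntegrable
    (hψ.intervalIntegrable.const_mul _), intervalIntegral.integral_const_mul]
  simp_rw [mul_comm (F' _), ibp, mul_comm (ψ _)]
  ring

-- The left side is the Beta integral `∫_0^1 t^p (1-t)^n dt`, expanded.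
theorem sum_range_neg_one_pow_mul_choose_div (p n : ℕ) :
    ∑ j ∈ range (n + 1), (-1 : ℝ) ^ j * n.choose j / (p + j + 1) =
      p ! * n ! / (p + n + 1)! := by
  induction n generalizing p with
  | zero => simp [Nat.factorial_succ]; field_simp
  | succ n ih =>
    have pascal : ∑ j ∈ range (n + 2), (-1 : ℝ) ^ j * (n + 1).choose j / (p + j + 1) =
        ∑ j ∈ range (n + 2), (-1 : ℝ) ^ j * n.choose j / (p + j + 1) -
          ∑ j ∈ range (n + 1), (-1 : ℝ) ^ j * n.choose j / ((p + 1 : ℕ) + j + 1) := by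
      rw [sum_range_succ' _ (n + 1),
        sum_range_succ' (fun j => (-1 : ℝ) ^ j * n.choose j / (p + j + 1)) (n + 1),
        ← sub_add_eq_add_sub, ← sum_sub_distrib]
      congr 1
      · refine sum_congr rfl fun j _ => ?_
        rw [Nat.choose_succ_succ']
        push_cast
        ring
      · simp
    rw [pascal, sum_range_succ _ (n + 1), ih, ih, Nat.choose_succ_self,
      show p + 1 + n + 1 = p + n + 1 + 1 by omega, show p + (n + 1) + 1 = p + n + 1 + 1 by omega,
      Nat.factorial_succ (p + n + 1), Nat.factorial_succ p, Nat.factorial_succ n]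
    push_cast
    field_simp
    ring

theorem uIcc_one_subset_Ioi {D : ℝ} (hD : 0 < D) : uIcc 1 D ⊆ Ioi 0 := fun _ hx =>
  (mem_uIcc.1 hx).elim (fun h => one_pos.trans_le h.1) fun h => hD.trans_le h.1

theorem continuousOn_log_pow_div (k : ℕ) : ContinuousOn (fun x => log x ^ k / x) (Ioi 0) :=
  ((continuousOn_log.mono fun _ hx => ne_of_gt hx).pow k).div continuousOn_id
    fun _ hx => ne_of_gt hx

theorem integral_log_pow_div_mul_integral {ψ : ℝ → ℝ} {D : ℝ} (hD : 0 < D)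
    (hψ : ContinuousOn ψ (uIcc 1 D)) (b : ℕ) :
    ∫ x in (1 : ℝ)..D, log x ^ b / x * ∫ u in x..D, ψ u =
      ((b : ℝ) + 1)⁻¹ * ∫ x in (1 : ℝ)..D, log x ^ (b + 1) * ψ x := by
  have hderiv : ∀ x ∈ uIcc 1 D,
      HasDerivAt (fun x => ((b : ℝ) + 1)⁻¹ * log x ^ (b + 1)) (log x ^ b / x) x := by
    intro x hx
    refine (((hasDerivAt_log (uIcc_one_subset_Ioi hD hx).ne').fun_pow (b + 1)).const_mul
      ((b : ℝ) + 1)⁻¹).congr_deriv ?_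
    push_cast
    field_simp
  rw [integral_deriv_mul_integral_eq hderiv
    ((continuousOn_log_pow_div b).mono (uIcc_one_subset_Ioi hD)).intervalIntegrable hψ,
    ← intervalIntegral.integral_const_mul]
  simp only [log_one, zero_pow (Nat.succ_ne_zero b), mul_zero, sub_zero, mul_assoc]

theorem integral_comp_mul_log_pow_div (g : ℝ → ℝ) (n : ℕ) {x : ℝ} (hx : x ≠ 0)
    (D : ℝ) :
    ∫ y in (1 : ℝ)..D / x, g (x * y) * log y ^ n / y =
      ∫ u in x..D, g u * (log u - log x) ^ n / u := by
  set G := fun u => g u * (log u - log x) ^ n / u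
  have hcomp : ∀ y, g (x * y) * log y ^ n / y = x * G (x * y) := by
    intro y
    rcases eq_or_ne y 0 with rfl | hy
    · simp [G]
    · simp only [G, log_mul hx hy]
      field_simp
      ring
  simp_rw [hcomp, intervalIntegral.integral_const_mul, integral_comp_mul_left G hx, mul_one,
    mul_div_cancel₀ D hx, smul_eq_mul, mul_inv_cancel_left₀ hx]

theorem integral_mul_sub_log_pow_div_eq_sum {g : ℝ → ℝ} {x D : ℝ} (n : ℕ)
    (hg : ∀ k, IntervalIntegrable (fun u => g u * log u ^ k / u) volume x D) :
    ∫ u in x..D, g u * (log u - log x) ^ n / u =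
      ∑ j ∈ range (n + 1), (-1 : ℝ) ^ j * n.choose j * log x ^ j *
        ∫ u in x..D, g u * log u ^ (n - j) / u := by
  have binomial : ∀ u, g u * (log u - log x) ^ n / u = ∑ j ∈ range (n + 1),
      (-1 : ℝ) ^ j * n.choose j * log x ^ j * (g u * log u ^ (n - j) / u) := fun u => by
    rw [sub_eq_neg_add, add_pow, Finset.mul_sum, Finset.sum_div]
    exact sum_congr rfl fun j _ => by rw [neg_pow]; ring
  simp_rw [binomial]
  rw [integral_finsetSum fun j _ => (hg _).const_mul _]
  simp_rw [intervalIntegral.integral_const_mul]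

theorem integral_log_pow_div_mul_integral_sub_log_pow {g : ℝ → ℝ} {D : ℝ} (hD : 0 < D)
    (hg : ContinuousOn g (uIcc 1 D)) (p n : ℕ) :
    ∫ x in (1 : ℝ)..D, log x ^ p / x * ∫ u in x..D, g u * (log u - log x) ^ n / u =
      p ! * n ! / (p + n + 1)! * ∫ x in (1 : ℝ)..D, g x * log x ^ (p + n + 1) / x := by
  have hpos := uIcc_one_subset_Ioi hD
  have hψ : ∀ k, ContinuousOn (fun u => g u * log u ^ k / u) (uIcc 1 D) := fun k => by
    simpa only [mul_div_assoc] using hg.fun_mul ((continuousOn_log_pow_div k).mono hpos)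
  have expand : ∀ x ∈ uIcc 1 D,
      log x ^ p / x * ∫ u in x..D, g u * (log u - log x) ^ n / u =
        ∑ j ∈ range (n + 1), (-1 : ℝ) ^ j * n.choose j *
          (log x ^ (p + j) / x * ∫ u in x..D, g u * log u ^ (n - j) / u) := by
    intro x hx
    rw [integral_mul_sub_log_pow_div_eq_sum n fun k =>
      ((hψ k).mono (uIcc_subset_uIcc_right hx)).intervalIntegrable, Finset.mul_sum]
    exact sum_congr rfl fun j _ => by ring
  have term : ∀ j ∈ range (n + 1),
      ∫ x in (1 : ℝ)..D, (-1 : ℝ) ^ j * n.choose j *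
          (log x ^ (p + j) / x * ∫ u in x..D, g u * log u ^ (n - j) / u) =
        (-1 : ℝ) ^ j * n.choose j / (p + j + 1) *
          ∫ x in (1 : ℝ)..D, g x * log x ^ (p + n + 1) / x := by
    intro j hj
    have hexp : p + j + 1 + (n - j) = p + n + 1 := by grind
    have hintegrand : (fun x => log x ^ (p + j + 1) * (g x * log x ^ (n - j) / x)) =
        fun x => g x * log x ^ (p + n + 1) / x := by
      funext x
      rw [← hexp, pow_add]
      ring
    rw [intervalIntegral.integral_const_mul, integral_log_pow_div_mul_integral hD (hψ _),
      hintegrand]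
    push_cast
    ring
  have hint : ∀ j ∈ range (n + 1), IntervalIntegrable (fun x => (-1 : ℝ) ^ j * n.choose j *
      (log x ^ (p + j) / x * ∫ u in x..D, g u * log u ^ (n - j) / u)) volume 1 D :=
    fun j _ => IntervalIntegrable.const_mul (ContinuousOn.intervalIntegrable <|
      ((continuousOn_log_pow_div _).mono hpos).mul
        (continuousOn_primitive_interval_left (hψ _).integrableOn_uIcc)) _
  rw [integral_congr expand, integral_finsetSum hint, sum_congr rfl term, ← Finset.sum_mul,
    sum_range_neg_one_pow_mul_choose_div]

theorem iterInt_eq_mul_integral {h : ℝ → ℝ} (hh : ContinuousOn h (Ici 1)) {l : List ℕ}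
    (hl : ∀ i ∈ l, 1 ≤ i) {t D : ℝ} (ht : 1 ≤ t) (hD : 1 ≤ D) :
    iterInt h l D t = ((l.map fun i => (i - 1)!).prod : ℕ) / (l.sum ! : ℝ) *
      ∫ x in (1 : ℝ)..D, h (t * x) * log x ^ l.sum / x := by
  induction l generalizing t D with
  | nil => simp [iterInt]
  | cons a l ih =>
    have ha : 1 ≤ a := hl a List.mem_cons_self
    have hg : ContinuousOn (fun u => h (t * u)) (uIcc 1 D) := by
      refine hh.comp (continuousOn_const.mul continuousOn_id) fun u hu => ?_
      rw [uIcc_of_le hD] at hu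
      exact one_le_mul_of_one_le_of_one_le ht hu.1
    have hinner : ∀ x ∈ uIcc 1 D, log x ^ (a - 1) / x * iterInt h l (D / x) (t * x) =
        ((l.map fun i => (i - 1)!).prod : ℕ) / (l.sum ! : ℝ) *
          (log x ^ (a - 1) / x * ∫ u in x..D, h (t * u) * (log u - log x) ^ l.sum / u) := by
      intro x hx
      rw [uIcc_of_le hD] at hx
      have hx0 : x ≠ 0 := by linarith [hx.1]
      rw [ih (fun i hi => hl i (List.mem_cons_of_mem a hi))
        (one_le_mul_of_one_le_of_one_le ht hx.1) ((one_le_div (by linarith [hx.1])).2 hx.2),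
        ← integral_comp_mul_log_pow_div (fun u => h (t * u)) l.sum hx0 D]
      simp only [mul_assoc t x]
      ring
    rw [iterInt, integral_congr hinner, intervalIntegral.integral_const_mul,
      integral_log_pow_div_mul_integral_sub_log_pow (by linarith) hg,
      show a - 1 + l.sum + 1 = (a :: l).sum by simp; omega, List.map_cons, List.prod_cons]
    push_cast
    field_simp

theorem iterated_log_integral_general (a : List ℕ)
    (ha12 : ∀ i ∈ a, i = 1 ∨ i = 2) (f : ℝ → ℝ) (hf : ContinuousOn f (Set.Ici 1))
    (D : ℝ) (hD : 1 ≤ D) :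
    iterInt f a D 1 =
      ((a.map (fun i => Nat.factorial (i - 1))).prod : ℕ) / (Nat.factorial a.sum : ℝ) *
        ∫ x in (1:ℝ)..D, f x * (Real.log x) ^ a.sum / x := by
  simpa only [one_mul] using
    iterInt_eq_mul_integral hf (fun i hi => by rcases ha12 i hi with rfl | rfl <;> norm_num)
      le_rfl hD

theorem iterated_log_integral (m : ℕ) (hm : 1 ≤ m) (a : List ℕ) (ha : a.length = m)
    (ha12 : ∀ i ∈ a, i = 1 ∨ i = 2) (f : ℝ → ℝ) (hf : ContinuousOn f (Set.Ici 1))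
    (D : ℝ) (hD : 1 ≤ D) :
    iterInt f a D 1 =
      ((a.map (fun i => Nat.factorial (i - 1))).prod : ℕ) / (Nat.factorial a.sum : ℝ) *
        ∫ x in (1:ℝ)..D, f x * (Real.log x) ^ a.sum / x :=
  iterated_log_integral_general a ha12 f hf D hD
end

section
/- Let r ≥ 1 be an integer, let f be a polynomial with real coefficients, let K = T(log T)^{-2}, and let A_r be as in the asymptotic ∑_{k≤x} d_r(k)²/k = A_r(log x)^{r²} + O((log T)^{r²−1}). Then for every ε > 0, ∑_{k ≤ K} (d_r(k)²/k)·f((log(K/k))/log K)² = A_r r² (log T)^{r²} ∫_0^1 (1−u)^{r²−1} f(u)² du + O((log T)^{r²−1+ε}) as T → ∞, where the implied constant depends on r, ε, and f. -/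
/-!
Write `L = log K`, so that `K = exp L` and the weight is `g t = f (1 - log t / L) ^ 2`.
Abel summation against `g`, together with the asymptotic for the partial sums `S x` of
`d_r(k)² / k`, gives `∑ (d_r(k)² / k) g(k) = A ∫_1^K (log^{r²} t)' g t dt` up to
`sup |S - A log^{r²}| · (|g K| + ∫_1^K |g'|)`. The substitution `v = 1 - log t / L` turns the
integral into `A r² L^{r²} ∫_0^1 (1 - v)^{r² - 1} f(v)² dv` and the total variation `∫_1^K |g'|`
into `∫_0^1 |(f²)'|`, which does not depend on `T`. Finally `L = log T - 2 log log T`, and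
replacing `L^{r²}` by `(log T)^{r²}` costs `O((log T)^{r² - 1} log log T)`.
-/

open ArithmeticFunction Finset

/-- The `r`-fold divisor function. -/
def dFold (r : ℕ) (n : ℕ) : ℕ := (ArithmeticFunction.zeta ^ r) n

open intervalIntegral MeasureTheory

section AbelSummation

variable {c : ℕ → ℝ} {φ φ' g g' : ℝ → ℝ} {b B : ℝ}

theorem sum_Icc_one_mul_eq_sub_integral_mul (hg : ∀ t ∈ Set.Icc 1 b, HasDerivAt g (g' t) t)
    (hg' : IntegrableOn g' (Set.Icc 1 b)) :
    ∑ k ∈ Icc 1 ⌊b⌋₊, g k * c k =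
      g b * ∑ k ∈ Icc 1 ⌊b⌋₊, c k - ∫ t in Set.Ioc 1 b, g' t * ∑ k ∈ Icc 1 ⌊t⌋₊, c k := by
  -- Mathlib's Abel summation sums over `Icc 0`; `c₀` removes the term `k = 0`.
  set c₀ : ℕ → ℝ := fun k => if k = 0 then 0 else c k
  have hc₀ : ∀ (n : ℕ) (w : ℕ → ℝ), ∑ k ∈ Icc 0 n, w k * c₀ k = ∑ k ∈ Icc 1 n, w k * c k := by
    intro n w
    rw [Icc_eq_cons_Ioc (Nat.zero_le n), sum_cons, ← Icc_add_one_left_eq_Ioc]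
    simp only [c₀, if_pos rfl, mul_zero, zero_add]
    exact sum_congr rfl fun k hk => by rw [if_neg (Nat.one_le_iff_ne_zero.mp (mem_Icc.1 hk).1)]
  have hsum : ∀ n : ℕ, ∑ k ∈ Icc 0 n, c₀ k = ∑ k ∈ Icc 1 n, c k := by
    simpa using (hc₀ · fun _ => 1)
  have hderiv : Set.EqOn (deriv g) g' (Set.Icc 1 b) := fun t ht => (hg t ht).deriv
  rw [← hc₀, sum_mul_eq_sub_integral_mul₀ c₀ (by simp [c₀]) b
    (fun t ht => (hg t ht).differentiableAt) (hg'.congr_fun hderiv.symm measurableSet_Icc), hsum]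
  congr 1
  refine setIntegral_congr_fun measurableSet_Ioc fun t ht => ?_
  rw [hderiv (Set.Ioc_subset_Icc_self ht), hsum]

theorem abs_sum_mul_sub_integral_mul_le (hb : 1 ≤ b) (hφ1 : φ 1 = 0)
    (hφ : ∀ t ∈ Set.Icc 1 b, HasDerivAt φ (φ' t) t) (hg : ∀ t ∈ Set.Icc 1 b, HasDerivAt g (g' t) t)
    (hφ' : ContinuousOn φ' (Set.Icc 1 b)) (hg' : ContinuousOn g' (Set.Icc 1 b))
    (hS : ∀ t ∈ Set.Icc 1 b, |∑ k ∈ Icc 1 ⌊t⌋₊, c k - φ t| ≤ B) :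
    |∑ k ∈ Icc 1 ⌊b⌋₊, g k * c k - ∫ t in 1..b, φ' t * g t| ≤
      B * (|g b| + ∫ t in 1..b, |g' t|) := by
  set S : ℝ → ℝ := fun t => ∑ k ∈ Icc 1 ⌊t⌋₊, c k
  have hIcc : Set.uIcc 1 b = Set.Icc 1 b := Set.uIcc_of_le hb
  have hgS : IntervalIntegrable (fun t => g' t * S t) volume 1 b :=
    (intervalIntegrable_iff_integrableOn_Icc_of_le hb).2
      (integrableOn_mul_sum_Icc c zero_le_one hg'.integrableOn_Icc)
  have hgφ : IntervalIntegrable (fun t => g' t * φ t) volume 1 b := by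
    refine ContinuousOn.intervalIntegrable ?_
    rw [hIcc]
    exact hg'.mul fun t ht => (hφ t ht).continuousAt.continuousWithinAt
  have hByParts : ∫ t in 1..b, φ' t * g t = g b * φ b - ∫ t in 1..b, g' t * φ t := by
    simp_rw [mul_comm (φ' _)]
    rw [integral_mul_deriv_eq_deriv_mul (hIcc ▸ hg) (hIcc ▸ hφ)
      (ContinuousOn.intervalIntegrable (hIcc ▸ hg'))
      (ContinuousOn.intervalIntegrable (hIcc ▸ hφ')), hφ1, mul_zero, sub_zero]
  have hAbel : ∑ k ∈ Icc 1 ⌊b⌋₊, g k * c k = g b * S b - ∫ t in 1..b, g' t * S t := by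
    rw [sum_Icc_one_mul_eq_sub_integral_mul hg hg'.integrableOn_Icc, integral_of_le hb]
  have hdiff : ∑ k ∈ Icc 1 ⌊b⌋₊, g k * c k - ∫ t in 1..b, φ' t * g t =
      g b * (S b - φ b) - ∫ t in 1..b, g' t * (S t - φ t) := by
    simp only [hAbel, hByParts, mul_sub, integral_sub hgS hgφ]
    ring
  have hB : ∀ t ∈ Set.uIoc 1 b, ‖g' t * (S t - φ t)‖ ≤ |g' t| * B := fun t ht => by
    rw [Real.norm_eq_abs, abs_mul]
    gcongr
    exact hS t (Set.uIoc_subset_uIcc.trans hIcc.subset ht)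
  rw [hdiff]
  calc |g b * (S b - φ b) - ∫ t in 1..b, g' t * (S t - φ t)|
      ≤ |g b| * B + ∫ t in 1..b, |g' t| * B := by
        refine (abs_sub _ _).trans (add_le_add ?_ ?_)
        · rw [abs_mul]
          gcongr
          exact hS b ⟨hb, le_rfl⟩
        · exact norm_integral_le_of_norm_le hb (ae_of_all _ fun t ht => hB t (by
            rwa [Set.uIoc_of_le hb])) ((hIcc ▸ hg'.abs).intervalIntegrable.mul_const B)
    _ = B * (|g b| + ∫ t in 1..b, |g' t|) := by
        rw [intervalIntegral.integral_mul_const]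
        ring

end AbelSummation

theorem exists_abs_sum_sub_le_of_one_le {c : ℕ → ℝ} {A : ℝ} {q e : ℕ}
    (h : ∃ C : ℝ, ∀ T x : ℝ, 2 ≤ x → x ≤ T →
      |∑ k ∈ Icc 1 ⌊x⌋₊, c k - A * Real.log x ^ q| ≤ C * Real.log T ^ e) :
    ∃ C : ℝ, 0 ≤ C ∧ ∀ T x : ℝ, 1 ≤ x → x ≤ T → 1 ≤ Real.log T →
      |∑ k ∈ Icc 1 ⌊x⌋₊, c k - A * Real.log x ^ q| ≤ C * Real.log T ^ e := by
  obtain ⟨C, hC⟩ := h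
  refine ⟨|C| + |c 1| + |A|, by positivity, fun T x hx hxT hT => ?_⟩
  have hTe : 1 ≤ Real.log T ^ e := one_le_pow₀ hT
  rcases le_or_gt 2 x with h2 | h2
  · calc _ ≤ C * Real.log T ^ e := hC T x h2 hxT
      _ ≤ (|C| + |c 1| + |A|) * Real.log T ^ e := by
        gcongr
        linarith [le_abs_self C, abs_nonneg (c 1), abs_nonneg A]
  · have hfloor : ⌊x⌋₊ = 1 :=
      Nat.floor_eq_iff (by linarith) |>.2 ⟨by simpa using hx, by norm_num; linarith⟩
    have hlog : Real.log x ^ q ≤ 1 := by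
      refine pow_le_one₀ (Real.log_nonneg hx) ?_
      linarith [Real.log_le_sub_one_of_pos (by linarith : 0 < x)]
    rw [hfloor, Icc_self, sum_singleton]
    calc _ ≤ |c 1| + |A| * Real.log x ^ q := by
          refine (abs_sub _ _).trans ?_
          rw [abs_mul, abs_of_nonneg (pow_nonneg (Real.log_nonneg hx) q)]
      _ ≤ (|C| + |c 1| + |A|) * 1 := by
          nlinarith [abs_nonneg C, abs_nonneg A]
      _ ≤ (|C| + |c 1| + |A|) * Real.log T ^ e := by
          gcongr

section LogWeight

variable {L : ℝ}

theorem hasDerivAt_one_sub_log_div {t : ℝ} (ht : t ≠ 0) :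
    HasDerivAt (fun t => 1 - Real.log t / L) (-(t⁻¹ / L)) t :=
  ((Real.hasDerivAt_log ht).div_const L).const_sub 1

theorem integral_comp_one_sub_log_div {G : ℝ → ℝ} (hL : 0 < L) (hG : Continuous G) :
    ∫ t in 1..Real.exp L, G (1 - Real.log t / L) / (t * L) = ∫ v in 0..1, G v := by
  have hpos : ∀ t ∈ Set.uIcc 1 (Real.exp L), 0 < t := fun t ht =>
    zero_lt_one.trans_le (Set.uIcc_of_le (Real.one_le_exp hL.le) ▸ ht).1
  have hsubst := integral_comp_mul_deriv (g := G)
    (fun t ht => hasDerivAt_one_sub_log_div (L := L) (hpos t ht).ne')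
    (ContinuousOn.neg ((continuousOn_inv₀.mono fun t ht => (hpos t ht).ne').div_const L)) hG
  simp only [Real.log_one, zero_div, sub_zero, Real.log_exp, div_self hL.ne', sub_self,
    Function.comp_def, mul_neg, intervalIntegral.integral_neg, integral_symm 0 1] at hsubst
  rw [← neg_inj.mp hsubst]
  congr 1 with t
  ring

theorem log_exp_div_div {x : ℝ} (hL : L ≠ 0) (hx : x ≠ 0) :
    Real.log (Real.exp L / x) / L = 1 - Real.log x / L := by
  rw [Real.log_div (Real.exp_pos L).ne' hx, Real.log_exp, sub_div, div_self hL]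

theorem abs_sum_mul_eval_sub_le {q : ℕ} (hq : 1 ≤ q) {c : ℕ → ℝ} (P : Polynomial ℝ) {A B : ℝ}
    (hL : 0 < L)
    (hS : ∀ t ∈ Set.Icc 1 (Real.exp L), |∑ k ∈ Icc 1 ⌊t⌋₊, c k - A * Real.log t ^ q| ≤ B) :
    |∑ k ∈ Icc 1 ⌊Real.exp L⌋₊, P.eval (1 - Real.log k / L) * c k -
        A * q * L ^ q * ∫ v in 0..1, (1 - v) ^ (q - 1) * P.eval v| ≤
      B * (|P.eval 0| + ∫ v in 0..1, |P.derivative.eval v|) := by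
  have hb : 1 ≤ Real.exp L := Real.one_le_exp hL.le
  have hpos : ∀ t ∈ Set.Icc 1 (Real.exp L), t ≠ 0 := fun t ht => (zero_lt_one.trans_le ht.1).ne'
  have key := abs_sum_mul_sub_integral_mul_le (c := c) (B := B) hb
    (φ := fun t => A * Real.log t ^ q) (φ' := fun t => A * (q * Real.log t ^ (q - 1) * t⁻¹))
    (g := fun t => P.eval (1 - Real.log t / L))
    (g' := fun t => P.derivative.eval (1 - Real.log t / L) * -(t⁻¹ / L))
    (by simp [Nat.one_le_iff_ne_zero.mp hq])
    (fun t ht => ((Real.hasDerivAt_log (hpos t ht)).pow q).const_mul A)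
    (fun t ht => (P.hasDerivAt _).comp t (hasDerivAt_one_sub_log_div (hpos t ht)))
    (fun t ht => by fun_prop (disch := exact hpos t ht))
    (fun t ht => by fun_prop (disch := exact hpos t ht)) hS
  have hmain : ∫ t in 1..Real.exp L, A * (q * Real.log t ^ (q - 1) * t⁻¹) *
      P.eval (1 - Real.log t / L) = A * q * L ^ q * ∫ v in 0..1, (1 - v) ^ (q - 1) * P.eval v := by
    rw [← intervalIntegral.integral_const_mul, ← integral_comp_one_sub_log_div hL (by fun_prop)]
    congr 1 with t
    obtain ⟨p, rfl⟩ := Nat.exists_eq_add_of_le' hq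
    rw [Nat.add_sub_cancel, sub_sub_cancel, div_pow]
    field_simp
    ring
  have hvar : ∫ t in 1..Real.exp L, |P.derivative.eval (1 - Real.log t / L) * -(t⁻¹ / L)| =
      ∫ v in 0..1, |P.derivative.eval v| := by
    rw [← integral_comp_one_sub_log_div hL (by fun_prop)]
    refine integral_congr fun t ht => ?_
    have ht0 : 0 < t := zero_lt_one.trans_le (Set.uIcc_of_le hb ▸ ht).1
    simp only [abs_mul, abs_neg, abs_div, abs_inv, abs_of_pos ht0, abs_of_pos hL]
    ring
  rwa [hmain, hvar, Real.log_exp, div_self hL.ne', sub_self] at key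

theorem abs_sum_mul_eval_sq_sub_le {q : ℕ} (hq : 1 ≤ q) {c : ℕ → ℝ} (f : Polynomial ℝ)
    {A C L₁ : ℝ} (hL : 0 < L) (hLL₁ : L ≤ L₁)
    (hS : ∀ t ∈ Set.Icc 1 (Real.exp L),
      |∑ k ∈ Icc 1 ⌊t⌋₊, c k - A * Real.log t ^ q| ≤ C * L₁ ^ (q - 1)) :
    |∑ k ∈ Icc 1 ⌊Real.exp L⌋₊, c k * f.eval (Real.log (Real.exp L / k) / L) ^ 2 -
        A * q * L₁ ^ q * ∫ v in 0..1, (1 - v) ^ (q - 1) * f.eval v ^ 2| ≤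
      L₁ ^ (q - 1) * (C * (|(f ^ 2).eval 0| + ∫ v in 0..1, |(f ^ 2).derivative.eval v|) +
        |A| * q ^ 2 * |∫ v in 0..1, (1 - v) ^ (q - 1) * f.eval v ^ 2| * (L₁ - L)) := by
  set I := ∫ v in 0..1, (1 - v) ^ (q - 1) * f.eval v ^ 2
  have hweight : ∀ k ∈ Icc 1 ⌊Real.exp L⌋₊, c k * f.eval (Real.log (Real.exp L / k) / L) ^ 2 =
      (f ^ 2).eval (1 - Real.log k / L) * c k := fun k hk => by
    have hk : (k : ℝ) ≠ 0 := by have := (mem_Icc.1 hk).1; positivity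
    rw [log_exp_div_div hL.ne' hk, Polynomial.eval_pow, mul_comm]
  have hmain := abs_sum_mul_eval_sub_le hq (f ^ 2) hL hS
  have hI : ∫ v in 0..1, (1 - v) ^ (q - 1) * (f ^ 2).eval v = I := by
    simp only [Polynomial.eval_pow, I]
  rw [hI] at hmain
  have hshift : |A * q * L ^ q * I - A * q * L₁ ^ q * I| ≤
      |A| * q ^ 2 * |I| * (L₁ - L) * L₁ ^ (q - 1) := by
    have h := abs_pow_sub_pow_le L L₁ q
    rw [abs_of_nonpos (sub_nonpos.2 hLL₁), abs_of_pos hL, abs_of_pos (hL.trans_le hLL₁),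
      max_eq_right hLL₁, neg_sub] at h
    rw [← sub_mul, ← mul_sub, abs_mul, abs_mul, abs_mul, Nat.abs_cast]
    calc |A| * q * |L ^ q - L₁ ^ q| * |I| ≤ |A| * q * ((L₁ - L) * q * L₁ ^ (q - 1)) * |I| := by
          gcongr
      _ = _ := by ring
  rw [sum_congr rfl hweight]
  refine (abs_sub_le _ (A * q * L ^ q * I) _).trans ((add_le_add hmain hshift).trans_eq ?_)
  ring

theorem mul_log_zpow_neg_two_eq_exp {T : ℝ} (hT : 0 < T) (h : 0 < Real.log T) :
    T * Real.log T ^ (-2 : ℤ) = Real.exp (Real.log T - 2 * Real.log (Real.log T)) := by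
  rw [Real.exp_sub, Real.exp_log hT, mul_comm 2, Real.exp_mul, Real.exp_log h, zpow_neg,
    div_eq_mul_inv]
  norm_cast

theorem two_mul_log_lt_self {x : ℝ} (hx : 6 < x) : 2 * Real.log x < x := by
  have hx0 : 0 < x := by linarith
  have hexp := Real.pow_div_factorial_le_exp x hx0.le 3
  rw [← Real.log_rpow hx0, Real.log_lt_iff_lt_exp (by positivity)]
  norm_num [Nat.factorial] at hexp ⊢
  nlinarith [mul_pos (mul_pos hx0 hx0) (sub_pos.2 hx)]

theorem pow_mul_add_mul_log_le {x ε a b : ℝ} (n : ℕ) (hx : 1 ≤ x) (hε : 0 < ε) (ha : 0 ≤ a)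
    (hb : 0 ≤ b) : x ^ n * (a + b * Real.log x) ≤ (a + b / ε) * x ^ (n + ε) := by
  have hx0 : 0 < x := zero_lt_one.trans_le hx
  have hpow : x ^ n ≤ x ^ ((n : ℝ) + ε) := by
    rw [← Real.rpow_natCast]
    exact Real.rpow_le_rpow_of_exponent_le hx (by linarith)
  have hlog : x ^ n * Real.log x ≤ x ^ ((n : ℝ) + ε) / ε := by
    rw [Real.rpow_add hx0, Real.rpow_natCast, mul_div_assoc]
    exact mul_le_mul_of_nonneg_left (Real.log_le_rpow_div hx0.le hε) (by positivity)
  calc x ^ n * (a + b * Real.log x) = a * x ^ n + b * (x ^ n * Real.log x) := by ring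
    _ ≤ a * x ^ ((n : ℝ) + ε) + b * (x ^ ((n : ℝ) + ε) / ε) := by gcongr
    _ = (a + b / ε) * x ^ ((n : ℝ) + ε) := by ring

theorem diagonal_term_D1 (r : ℕ) (hr : 1 ≤ r) (f : Polynomial ℝ) (A : ℝ)
    (hA : ∃ C : ℝ, ∀ T x : ℝ, 2 ≤ x → x ≤ T →
      |(∑ k ∈ Finset.Icc 1 ⌊x⌋₊, (dFold r k : ℝ) ^ 2 / k) - A * (Real.log x) ^ (r ^ 2)|
        ≤ C * (Real.log T) ^ (r ^ 2 - 1))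
    (ε : ℝ) (hε : 0 < ε) :
    ∃ C T₀ : ℝ, ∀ T : ℝ, T₀ ≤ T →
      |(∑ k ∈ Finset.Icc 1 ⌊T * (Real.log T) ^ (-2 : ℤ)⌋₊,
          (dFold r k : ℝ) ^ 2 / k *
            (f.eval (Real.log ((T * (Real.log T) ^ (-2 : ℤ)) / k) /
              Real.log (T * (Real.log T) ^ (-2 : ℤ)))) ^ 2) -
        A * (r : ℝ) ^ 2 * (Real.log T) ^ (r ^ 2) *
          ∫ u in (0:ℝ)..1, (1 - u) ^ (r ^ 2 - 1) * (f.eval u) ^ 2|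
      ≤ C * (Real.log T) ^ (((r : ℝ) ^ 2 - 1) + ε) := by
  have hq : 1 ≤ r ^ 2 := Nat.one_le_pow _ _ hr
  obtain ⟨C, hC0, hC⟩ := exists_abs_sum_sub_le_of_one_le hA
  set V := |(f ^ 2).eval 0| + ∫ v in (0:ℝ)..1, |(f ^ 2).derivative.eval v|
  set I := ∫ u in (0:ℝ)..1, (1 - u) ^ (r ^ 2 - 1) * (f.eval u) ^ 2
  have hV : 0 ≤ V := add_nonneg (abs_nonneg _)
    (intervalIntegral.integral_nonneg zero_le_one fun v _ => abs_nonneg _)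
  refine ⟨C * V + 2 * |A| * ((r : ℝ) ^ 2) ^ 2 * |I| / ε, Real.exp 7, fun T hT => ?_⟩
  have hT0 : 0 < T := (Real.exp_pos 7).trans_le hT
  have h7 : 7 ≤ Real.log T := (Real.le_log_iff_exp_le hT0).2 hT
  set L₁ := Real.log T
  have hL : 0 < L₁ - 2 * Real.log L₁ := sub_pos.2 (two_mul_log_lt_self (by linarith))
  have hLL₁ : L₁ - 2 * Real.log L₁ ≤ L₁ :=
    sub_le_self _ (mul_nonneg zero_le_two (Real.log_nonneg (by linarith)))
  have hK : Real.exp (L₁ - 2 * Real.log L₁) ≤ T :=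
    (Real.exp_le_exp.2 hLL₁).trans_eq (Real.exp_log hT0)
  have hexp : ((r ^ 2 - 1 : ℕ) : ℝ) = (r : ℝ) ^ 2 - 1 := by push_cast [Nat.cast_sub hq]; ring
  rw [mul_log_zpow_neg_two_eq_exp hT0 (by linarith), Real.log_exp, ← hexp]
  have hD := abs_sum_mul_eval_sq_sub_le hq f hL hLL₁
    fun t ht => hC T t ht.1 (ht.2.trans hK) (by linarith)
  push_cast at hD
  calc _ ≤ _ := hD
    _ = L₁ ^ (r ^ 2 - 1) * (C * V + 2 * |A| * ((r : ℝ) ^ 2) ^ 2 * |I| * Real.log L₁) := by ring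
    _ ≤ _ := pow_mul_add_mul_log_le _ (by linarith) hε (by positivity) (by positivity)
end LogWeight
end
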